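/- arXiv:1510.05597 — 3 statements merged into one kernel-verified Lean document; each statement's English description precedes it below -/
import Mathlib

section
/- If a field K is complete with respect to a discrete valuation v, then every discrete valuation on K (with value group the integers) is equivalent to v. -/
/-!
Let `v c < 1`. At most one prime `ℓ` has `v ℓ < 1`, and for every other prime completeness
(Hensel's lemma, in the form of a contraction mapping) makes `1 + c` an `ℓ`-th power. So the
exponent of `w (1 + c)` in `ℤ` is divisible by arbitrarily large integers, i.e. `w (1 + c) = 1`,
whence `w c ≤ 1`. Thus the maximal ideal of `v` lies in the valuation ring of `w`, and for two
nontrivial valuations with archimedean value groups this forces equivalence.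
-/

open Finset Metric Set IsUltrametricDist WithZero

namespace Valuation

section Ring

variable {R : Type*} [Ring R]

lemma isNontrivial_of_surjective {v : Valuation R ℤᵐ⁰} (hv : Function.Surjective v) :
    v.IsNontrivial := by
  obtain ⟨x, hx⟩ := hv (exp 1)
  exact ⟨x, by simp [hx]⟩

variable {Γ₀ : Type*} [LinearOrderedCommGroupWithZero Γ₀] (v : Valuation R Γ₀)

lemma val_intCast_le_one (n : ℤ) : v n ≤ 1 :=
  intCast_mem v.integer n

lemma val_natCast_eq_one_of_val_natCast_lt_one {p q : ℕ} (hp : p.Prime) (hq : q.Prime)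
    (hpq : p ≠ q) (h : v p < 1) : v q = 1 := by
  refine le_antisymm (mod_cast v.val_intCast_le_one q) (not_lt.mp fun hq1 => ?_)
  obtain ⟨a, b, hab⟩ := (Nat.coprime_primes hp hq |>.mpr hpq).isCoprime
  have hlt : ∀ (k : ℤ) (m : ℕ), v m < 1 → v (k * m) < 1 := fun k m hm => by
    rw [map_mul]
    exact Right.mul_lt_one_of_le_of_lt (v.val_intCast_le_one k) hm
  have hab' : (a : R) * p + (b : R) * q = 1 := by exact_mod_cast congrArg (Int.cast : ℤ → R) hab
  simpa [hab'] using v.map_add_lt (hlt a p h) (hlt b q hq1)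

lemma exists_gt_val_natCast_eq_one (N : ℕ) : ∃ n > N, v (n : R) = 1 := by
  obtain ⟨p, hNp, hp⟩ := Nat.exists_infinite_primes (N + 1)
  obtain ⟨q, hpq, hq⟩ := Nat.exists_infinite_primes (p + 1)
  rcases (mod_cast v.val_intCast_le_one p : v p ≤ 1).lt_or_eq with hp1 | hp1
  · exact ⟨q, by omega, v.val_natCast_eq_one_of_val_natCast_lt_one hp hq (by omega) hp1⟩
  · exact ⟨p, by omega, hp1⟩

end Ring

variable {K Γ₀ : Type*} [Field K] [LinearOrderedCommGroupWithZero Γ₀] [MulArchimedean Γ₀]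

lemma exists_val_pow_mul_lt_one (v : Valuation K Γ₀) {a b : K} (ha : v a < 1) (hb : b ≠ 0) :
    ∃ n : ℕ, v (a ^ n * b) < 1 := by
  have hvb : v b ≠ 0 := v.ne_zero_iff.mpr hb
  obtain ⟨n, hn⟩ := exists_pow_lt₀ ha (Units.mk0 (v b)⁻¹ (inv_ne_zero hvb))
  refine ⟨n, ?_⟩
  rw [map_mul, map_pow]
  calc v a ^ n * v b < (v b)⁻¹ * v b := mul_lt_mul_of_pos_right hn (zero_lt_iff.mpr hvb)
    _ = 1 := inv_mul_cancel₀ hvb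

theorem isEquiv_of_val_lt_one_imp_val_le_one (v w : Valuation K Γ₀) [v.IsNontrivial]
    [w.IsNontrivial] (h : ∀ x, v x < 1 → w x ≤ 1) : v.IsEquiv w := by
  refine isEquiv_of_val_le_one fun x => ⟨fun hvx => ?_, fun hwx => ?_⟩
  · by_contra! hwx
    have hx : x ≠ 0 := by rintro rfl; simp at hwx
    obtain ⟨π, hπ0, hπ⟩ := IsNontrivial.exists_lt_one (v := v)
    obtain ⟨n, hn⟩ := w.exists_val_pow_mul_lt_one ((w.one_lt_val_iff hx).mp hwx)
      (inv_ne_zero hπ0)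
    have hvxπ : v (x ^ n * π) < 1 := by
      rw [map_mul, map_pow]
      exact Right.mul_lt_one_of_le_of_lt (pow_le_one' hvx n) hπ
    rw [inv_pow, ← mul_inv, ← w.one_lt_val_iff (by simp [hx, hπ0])] at hn
    exact (h _ hvxπ).not_gt hn
  · by_contra! hvx
    have hx : x ≠ 0 := by rintro rfl; simp at hvx
    have hvx' : v x⁻¹ < 1 := (v.one_lt_val_iff hx).mp hvx
    have hwx1 : w x = 1 :=
      le_antisymm hwx (by simpa using (w.val_le_one_iff (inv_ne_zero hx)).mp (h _ hvx'))
    obtain ⟨t, ht⟩ := IsNontrivial.exists_one_lt (v := w)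
    have ht0 : t ≠ 0 := by rintro rfl; simp at ht
    obtain ⟨n, hn⟩ := v.exists_val_pow_mul_lt_one hvx' ht0
    have := h _ hn
    rw [map_mul, map_pow, map_inv₀, hwx1, inv_one, one_pow, one_mul] at this
    exact this.not_gt ht

lemma val_eq_one_of_forall_exists_pow_eq (w : Valuation K ℤᵐ⁰) {x : K} (hx : x ≠ 0)
    (h : ∀ N : ℕ, ∃ n > N, ∃ y : K, y ^ n = x) : w x = 1 := by
  have hwx : w x ≠ 0 := w.ne_zero_iff.mpr hx
  obtain ⟨n, hnN, y, rfl⟩ := h (log (w x)).natAbs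
  have hlog : log (w (y ^ n)) = n * log (w y) := by
    rw [map_pow, log_pow, nsmul_eq_mul]
  rw [← exp_log hwx, exp_eq_one]
  exact Int.eq_zero_of_dvd_of_natAbs_lt_natAbs (Dvd.intro _ hlog.symm) (by simpa using hnN)

end Valuation

section Ultrametric

variable {K : Type*} [NormedField K] [IsUltrametricDist K] {x y : K} {r : ℝ}

lemma norm_mul_sub_one_le (hr : r ≤ 1) (hx : ‖x - 1‖ ≤ r) (hy : ‖y - 1‖ ≤ r) :
    ‖x * y - 1‖ ≤ r := by
  have hx1 : ‖x‖ ≤ 1 := by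
    simpa using (norm_add_le_max (x - 1) 1).trans (max_le (hx.trans hr) norm_one.le)
  calc ‖x * y - 1‖ = ‖x * (y - 1) + (x - 1)‖ := by ring_nf
    _ ≤ max (‖x‖ * ‖y - 1‖) ‖x - 1‖ := by simpa using norm_add_le_max (x * (y - 1)) (x - 1)
    _ ≤ r := max_le (by nlinarith [norm_nonneg x, norm_nonneg (y - 1)]) hx

lemma norm_pow_sub_one_le (hr : r ≤ 1) (hx : ‖x - 1‖ ≤ r) (n : ℕ) : ‖x ^ n - 1‖ ≤ r := by
  induction n with
  | zero => simpa using (norm_nonneg _).trans hx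
  | succ n ih => simpa [pow_succ] using norm_mul_sub_one_le hr ih hx

lemma norm_pow_sub_pow_sub_mul_sub_le (hr : r ≤ 1) (hx : ‖x - 1‖ ≤ r) (hy : ‖y - 1‖ ≤ r)
    (n : ℕ) : ‖x ^ n - y ^ n - n * (x - y)‖ ≤ r * ‖x - y‖ := by
  have hsum : x ^ n - y ^ n - n * (x - y) =
      (∑ i ∈ range n, (x ^ i * y ^ (n - 1 - i) - 1)) * (x - y) := by
    rw [sum_sub_distrib, sub_mul, geom_sum₂_mul]
    simp
  rw [hsum, norm_mul]
  gcongr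
  exact norm_sum_le_of_forall_le_of_nonneg ((norm_nonneg _).trans hx) fun i _ =>
    norm_mul_sub_one_le hr (norm_pow_sub_one_le hr hx i) (norm_pow_sub_one_le hr hy _)

theorem exists_pow_eq_one_add [CompleteSpace K] {c : K} (hc : ‖c‖ < 1) {n : ℕ}
    (hn : ‖(n : K)‖ = 1) : ∃ y : K, y ^ n = 1 + c := by
  have hn0 : (n : K) ≠ 0 := norm_ne_zero_iff.mp (by simp [hn])
  set s := closedBall (1 : K) ‖c‖
  -- Newton's map for `X ^ n - (1 + c)`, with the derivative frozen at its value `n` at `1`.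
  let F : K → K := fun x => x - (x ^ n - (1 + c)) / n
  have hF : ∀ x y, F x - F y = -(x ^ n - y ^ n - n * (x - y)) / n := fun x y => by
    simp only [F]
    field_simp
    ring
  have hlip : ∀ x ∈ s, ∀ y ∈ s, ‖F x - F y‖ ≤ ‖c‖ * ‖x - y‖ := fun x hx y hy => by
    rw [hF, norm_div, norm_neg, hn, div_one]
    exact norm_pow_sub_pow_sub_mul_sub_le hc.le (mem_closedBall_iff_norm.mp hx)
      (mem_closedBall_iff_norm.mp hy) n
  have hmaps : MapsTo F s s := fun x hx => by
    have hF1 : F 1 - 1 = c / n := by simp only [F]; ring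
    rw [mem_closedBall_iff_norm, ← sub_add_sub_cancel _ (F 1)]
    refine (norm_add_le_max _ _).trans (max_le ?_ (by simp [hF1, hn]))
    exact (hlip x hx 1 (mem_closedBall_self (norm_nonneg c))).trans
      (mul_le_of_le_one_right (norm_nonneg c) ((mem_closedBall_iff_norm.mp hx).trans hc.le))
  have hcontr : ContractingWith ‖c‖₊ (hmaps.restrict F s s) :=
    ⟨by simpa [← NNReal.coe_lt_coe] using hc, LipschitzWith.of_dist_le_mul fun x y => by
      simpa only [Subtype.dist_eq, MapsTo.val_restrict_apply, dist_eq_norm, coe_nnnorm] using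
        hlip x x.2 y y.2⟩
  obtain ⟨y, -, hy, -⟩ := hcontr.exists_fixedPoint' isClosed_closedBall.isComplete hmaps
    (mem_closedBall_self (norm_nonneg c)) (edist_ne_top _ _)
  have hy' : (y ^ n - (1 + c)) / n = 0 := sub_eq_self.mp hy
  exact ⟨y, by rwa [div_eq_zero_iff, or_iff_left hn0, sub_eq_zero] at hy'⟩

end Ultrametric

theorem Valued.exists_pow_eq_one_add {K Γ₀ : Type*} [Field K] [LinearOrderedCommGroupWithZero Γ₀]
    [Valued K Γ₀] [(Valued.v : Valuation K Γ₀).RankOne] [CompleteSpace K] {c : K}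
    (hc : Valued.v c < 1) {n : ℕ} (hn : Valued.v (n : K) = 1) : ∃ y : K, y ^ n = 1 + c := by
  let := Valued.toNormedField K Γ₀
  exact _root_.exists_pow_eq_one_add (Valued.toNormedField.norm_lt_one_iff.mpr hc)
    (le_antisymm (Valued.toNormedField.norm_le_one_iff.mpr hn.le)
      (Valued.toNormedField.one_le_norm_iff.mpr hn.ge))

/-- **F. K. Schmidt's theorem.** If a field `K` is complete with respect to a discrete
valuation `v` (a surjective valuation with value group `ℤ`), then every discrete valuation
on `K` (with value group the integers) is equivalent to `v`. -/
theorem complete_discrete_valuation_unique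
    (K : Type*) [Field K] [hv : Valued K (WithZero (Multiplicative ℤ))]
    [CompleteSpace K]
    (hv_surj : Function.Surjective hv.v)
    (w : Valuation K (WithZero (Multiplicative ℤ)))
    (hw_surj : Function.Surjective w) :
    Valuation.IsEquiv w hv.v := by
  have := Valuation.isNontrivial_of_surjective hv_surj
  have := Valuation.isNontrivial_of_surjective hw_surj
  let := Valuation.IsRankOneDiscrete.rankOne hv.v one_lt_two
  refine (Valuation.isEquiv_of_val_lt_one_imp_val_le_one hv.v w fun c hc => ?_).symm
  have h1c : w (1 + c) = 1 := by
    refine w.val_eq_one_of_forall_exists_pow_eq ?_ fun N => ?_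
    · exact hv.v.ne_zero_iff.mp (by simp [hv.v.map_one_add_of_lt hc])
    · obtain ⟨n, hnN, hn⟩ := hv.v.exists_gt_val_natCast_eq_one N
      exact ⟨n, hnN, Valued.exists_pow_eq_one_add hc hn⟩
  calc w c = w ((1 + c) - 1) := by rw [add_sub_cancel_left]
    _ ≤ max (w (1 + c)) (w 1) := w.map_sub _ _
    _ = 1 := by simp [h1c]
end

section
/- Let R be a reduced commutative ring with finitely many minimal primes Q₁,…,Q_r, and let R' be the integral closure of R in its total ring of fractions. Then R' is isomorphic to the product ∏_{i=1}^r (R/Q_i)', where (R/Q_i)' denotes the integral closure of R/Q_i in its field of fractions. -/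
/-!
The minimal primes `Q` of a reduced ring `R` intersect in `0`, and their union is the set of
zero divisors, so `R → ∏_Q Frac(R/Q)` is injective and inverts exactly the non-zero-divisors.
Every element of the product is a fraction: choosing `e_Q` in all minimal primes but `Q` (prime
avoidance), the family `(a_Q / b_Q)_Q` is the image of `(∑ e_Q a_Q) / (∑ e_Q b_Q)`. So
`∏_Q Frac(R/Q)` is the total ring of fractions of `R`. Integral closure commutes with finite
products, and in the factor `Frac(R/Q)` integrality over `R` and over `R/Q` agree.
-/

open Polynomial
open scoped nonZeroDivisors

section IntegralClosurePi

variable {R ι : Type*} [CommRing R] {A : ι → Type*}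

theorem IsIntegral.pi_single [∀ i, CommRing (A i)] [∀ i, Algebra R (A i)] [DecidableEq ι]
    {i : ι} {y : A i} (hy : IsIntegral R y) : IsIntegral R (Pi.single i y : ∀ j, A j) := by
  obtain ⟨p, hp, hpy⟩ := hy
  refine ⟨p * X, hp.mul monic_X, funext fun j => ?_⟩
  rw [← aeval_def] at hpy ⊢
  change Pi.evalAlgHom R A j (aeval _ _) = 0
  rw [← aeval_algHom_apply, Pi.evalAlgHom_apply]
  by_cases hj : j = i
  · subst hj
    simp [hpy]
  · simp [hj]

theorem isIntegral_pi_iff [∀ i, CommRing (A i)] [∀ i, Algebra R (A i)] [Finite ι]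
    {x : ∀ i, A i} : IsIntegral R x ↔ ∀ i, IsIntegral R (x i) := by
  classical
  cases nonempty_fintype ι
  refine ⟨fun hx i => hx.map (Pi.evalAlgHom R A i), fun hx => ?_⟩
  rw [← Finset.univ_sum_single x]
  exact IsIntegral.sum _ fun i _ => (hx i).pi_single

def integralClosurePiEquiv [∀ i, CommRing (A i)] [∀ i, Algebra R (A i)] [Finite ι] :
    integralClosure R (∀ i, A i) ≃ₐ[R] ∀ i, integralClosure R (A i) where
  toFun x i := ⟨x.1 i, isIntegral_pi_iff.mp x.2 i⟩
  invFun y := ⟨fun i => y i, isIntegral_pi_iff.mpr fun i => (y i).2⟩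
  left_inv _ := rfl
  right_inv _ := rfl
  map_mul' _ _ := rfl
  map_add' _ _ := rfl
  commutes' _ := rfl

end IntegralClosurePi

theorem isIntegral_iff_of_algebraMap_surjective {R S A : Type*} [CommRing R] [CommRing S]
    [Ring A] [Algebra R S] [Algebra S A] [Algebra R A] [IsScalarTower R S A]
    (h : Function.Surjective (algebraMap R S)) {x : A} : IsIntegral R x ↔ IsIntegral S x :=
  haveI := Algebra.isIntegral_of_surjective h
  ⟨IsIntegral.tower_top, isIntegral_trans x⟩

def integralClosureEquivOfAlgebraMapSurjective {R S A : Type*} [CommRing R] [CommRing S]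
    [CommRing A] [Algebra R S] [Algebra S A] [Algebra R A] [IsScalarTower R S A]
    (h : Function.Surjective (algebraMap R S)) :
    integralClosure S A ≃ₐ[R] integralClosure R A where
  toFun x := ⟨x, (isIntegral_iff_of_algebraMap_surjective h).mpr x.2⟩
  invFun x := ⟨x, (isIntegral_iff_of_algebraMap_surjective h).mp x.2⟩
  left_inv _ := rfl
  right_inv _ := rfl
  map_mul' _ _ := rfl
  map_add' _ _ := rfl
  commutes' _ := rfl

section TotalRingOfFractions

variable {R : Type*} [CommRing R]

theorem algebraMap_fractionRing_quotient_eq_zero_iff (P : Ideal R) [P.IsPrime] {r : R} :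
    algebraMap R (FractionRing (R ⧸ P)) r = 0 ↔ r ∈ P := by
  rw [IsScalarTower.algebraMap_apply R (R ⧸ P), IsFractionRing.to_map_eq_zero_iff,
    Ideal.Quotient.algebraMap_eq, Ideal.Quotient.eq_zero_iff_mem]

theorem exists_mul_algebraMap_eq_of_fractionRing_quotient (P : Ideal R) [P.IsPrime]
    (z : FractionRing (R ⧸ P)) :
    ∃ a b : R, b ∉ P ∧ z * algebraMap R _ b = algebraMap R _ a := by
  obtain ⟨⟨a, b⟩, hab⟩ := IsLocalization.surj (R ⧸ P)⁰ z
  obtain ⟨a, rfl⟩ := Ideal.Quotient.mk_surjective a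
  obtain ⟨b', hb'⟩ := Ideal.Quotient.mk_surjective (b : R ⧸ P)
  refine ⟨a, b', fun hb => nonZeroDivisors.ne_zero b.2 ?_, ?_⟩
  · rwa [← hb', Ideal.Quotient.eq_zero_iff_mem]
  · simpa [IsScalarTower.algebraMap_apply R (R ⧸ P), hb'] using hab

theorem eq_zero_of_forall_mem_minimalPrimes [IsReduced R] {x : R}
    (h : ∀ Q ∈ minimalPrimes R, x ∈ Q) : x = 0 := by
  have hx : x ∈ sInf (minimalPrimes R) := Ideal.mem_sInf.mpr fun {Q} hQ => h Q hQ
  rwa [minimalPrimes, Ideal.sInf_minimalPrimes, Ideal.radical_bot_of_isReduced] at hx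

theorem mem_nonZeroDivisors_iff_forall_notMem_minimalPrimes [IsReduced R] {s : R} :
    s ∈ R⁰ ↔ ∀ Q ∈ minimalPrimes R, s ∉ Q := by
  refine ⟨fun hs Q hQ hsQ => notMem_nonZeroDivisors_of_mem_mem_minimalPrimes hsQ hQ hs,
    fun h => mem_nonZeroDivisors_iff_right.mpr fun t ht =>
      eq_zero_of_forall_mem_minimalPrimes fun Q hQ => ?_⟩
  exact (hQ.1.1.mem_or_mem (ht ▸ Q.zero_mem)).resolve_right (h Q hQ)

theorem exists_notMem_and_forall_ne_mem_minimalPrimes [Finite (minimalPrimes R)]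
    (P : minimalPrimes R) : ∃ e : R, e ∉ P.1 ∧ ∀ Q : minimalPrimes R, Q ≠ P → e ∈ Q.1 := by
  classical
  cases nonempty_fintype (minimalPrimes R)
  have hnle : ¬ (Finset.univ.erase P).inf (fun Q : minimalPrimes R => Q.1) ≤ P.1 := by
    intro hle
    obtain ⟨Q, hQ, hQP⟩ := P.2.1.1.inf_le'.mp hle
    exact (Finset.mem_erase.mp hQ).1 (Subtype.ext (le_antisymm hQP (P.2.2 Q.2.1 hQP)))
  obtain ⟨e, he, heP⟩ := SetLike.not_le_iff_exists.mp hnle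
  exact ⟨e, heP, fun Q hQ => Finset.inf_le (f := fun Q : minimalPrimes R => Q.1)
    (Finset.mem_erase.mpr ⟨hQ, Finset.mem_univ Q⟩) he⟩

theorem exists_mul_algebraMap_eq_pi_fractionRing_quotient_minimalPrimes [IsReduced R]
    [Finite (minimalPrimes R)] (z : ∀ Q : minimalPrimes R, FractionRing (R ⧸ Q.1)) :
    ∃ x : R × R⁰, z * algebraMap R _ x.2 = algebraMap R _ x.1 := by
  classical
  cases nonempty_fintype (minimalPrimes R)
  have : ∀ Q : minimalPrimes R, Q.1.IsPrime := fun Q => Q.2.1.1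
  choose e he hne using exists_notMem_and_forall_ne_mem_minimalPrimes (R := R)
  choose a b hb hab using fun Q : minimalPrimes R =>
    exists_mul_algebraMap_eq_of_fractionRing_quotient Q.1 (z Q)
  have hsum : ∀ (c : minimalPrimes R → R) (Q : minimalPrimes R),
      algebraMap R (FractionRing (R ⧸ Q.1)) (∑ P, e P * c P) =
        algebraMap R _ (e Q) * algebraMap R _ (c Q) := by
    intro c Q
    rw [map_sum, Finset.sum_eq_single Q, map_mul]
    · intro P _ hPQ
      rw [algebraMap_fractionRing_quotient_eq_zero_iff]
      exact Q.1.mul_mem_right _ (hne P Q hPQ.symm)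
    · simp
  have hs : ∑ P, e P * b P ∈ R⁰ :=
    mem_nonZeroDivisors_iff_forall_notMem_minimalPrimes.mpr fun Q hQ => by
      have := hQ.1.1
      rw [← algebraMap_fractionRing_quotient_eq_zero_iff, hsum b ⟨Q, hQ⟩]
      exact mul_ne_zero ((algebraMap_fractionRing_quotient_eq_zero_iff Q).not.mpr (he ⟨Q, hQ⟩))
        ((algebraMap_fractionRing_quotient_eq_zero_iff Q).not.mpr (hb ⟨Q, hQ⟩))
  refine ⟨(∑ P, e P * a P, ⟨_, hs⟩), funext fun Q => ?_⟩
  rw [Pi.mul_apply, Pi.algebraMap_apply, Pi.algebraMap_apply, hsum, hsum, ← hab]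
  ring

theorem isLocalization_pi_fractionRing_quotient_minimalPrimes [IsReduced R]
    [Finite (minimalPrimes R)] :
    IsLocalization R⁰ (∀ Q : minimalPrimes R, FractionRing (R ⧸ Q.1)) := by
  have : ∀ Q : minimalPrimes R, Q.1.IsPrime := fun Q => Q.2.1.1
  refine (isLocalization_iff _ _).mpr ⟨fun s => Pi.isUnit_iff.mpr fun Q => ?_,
    exists_mul_algebraMap_eq_pi_fractionRing_quotient_minimalPrimes, fun {x y} hxy => ⟨1, ?_⟩⟩
  · exact isUnit_iff_ne_zero.mpr ((algebraMap_fractionRing_quotient_eq_zero_iff Q.1).not.mpr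
      fun hs => notMem_nonZeroDivisors_of_mem_mem_minimalPrimes hs Q.2 s.2)
  · rw [← sub_eq_zero, ← mul_sub]
    refine mul_eq_zero_of_right _ (eq_zero_of_forall_mem_minimalPrimes fun Q hQ => ?_)
    have := hQ.1.1
    rw [← algebraMap_fractionRing_quotient_eq_zero_iff, map_sub, sub_eq_zero]
    exact congrFun hxy ⟨Q, hQ⟩

end TotalRingOfFractions

/-- Let `R` be a reduced commutative ring with finitely many minimal primes
`Q₁, …, Q_r`, and let `R'` be the integral closure of `R` in its total ring of fractions.
Then `R'` is isomorphic to the product `∏ᵢ (R/Qᵢ)'`, where `(R/Qᵢ)'` denotes the integral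
closure of `R/Qᵢ` in its field of fractions. -/
theorem integralClosure_iso_prod_of_reduced
    (R : Type*) [CommRing R] [IsReduced R]
    [Finite {Q : Ideal R // Q ∈ minimalPrimes R}] :
    Nonempty ((integralClosure R (FractionRing R)) ≃+*
      ((Q : {Q : Ideal R // Q ∈ minimalPrimes R}) →
        integralClosure (R ⧸ Q.1) (FractionRing (R ⧸ Q.1)))) := by
  have := isLocalization_pi_fractionRing_quotient_minimalPrimes (R := R)
  let e := IsLocalization.algEquiv R⁰ (FractionRing R)
    (∀ Q : minimalPrimes R, FractionRing (R ⧸ Q.1))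
  exact ⟨(e.mapIntegralClosure.trans <| integralClosurePiEquiv.trans <| AlgEquiv.piCongrRight
    fun _ => (integralClosureEquivOfAlgebraMapSurjective
      Ideal.Quotient.mk_surjective).symm).toRingEquiv⟩
end

section
/- Let k be a field. The localization k[[s,t]][t⁻¹] of the formal power series ring in two variables obtained by inverting t is a principal ideal domain. -/
/-!
Write `k⟦s, t⟧ = A⟦s⟧` with `A = k⟦t⟧`, a complete discrete valuation ring with uniformizer `t`.
A nonzero `g ∈ A⟦s⟧` is `tᵈ g'` with `g'` not divisible by `t`, and by Weierstrass preparation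
`g'` is a unit times a distinguished polynomial `f ∈ A[s]`. So after inverting `t` every element is
associated to the image of a polynomial over `Frac A = k((t))`, and ideals of `A⟦s⟧[t⁻¹]` are
images of ideals of the principal ideal domain `k((t))[s]`.
-/

theorem IsPrincipalIdealRing.of_forall_associated_map {R S : Type*} [CommSemiring R]
    [CommSemiring S] [IsPrincipalIdealRing R] (φ : R →+* S)
    (h : ∀ x : S, ∃ r : R, Associated (φ r) x) : IsPrincipalIdealRing S where
  principal I := by
    have hI : (I.comap φ).map φ = I := by
      refine le_antisymm Ideal.map_comap_le fun x hx => ?_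
      obtain ⟨r, hr⟩ := h x
      exact Ideal.mem_of_dvd _ hr.dvd
        (Ideal.mem_map_of_mem φ (Ideal.mem_comap.mpr (Ideal.mem_of_dvd _ hr.symm.dvd hx)))
    obtain ⟨p, hp⟩ := (IsPrincipalIdealRing.principal (I.comap φ)).principal
    refine ⟨⟨φ p, ?_⟩⟩
    rw [← hI, hp, Ideal.submodule_span_eq, Ideal.map_span, Set.image_singleton,
      Ideal.submodule_span_eq]

namespace PowerSeries

open IsLocalRing

instance {k : Type*} [Field k] : IsAdicComplete (maximalIdeal k⟦X⟧) k⟦X⟧ := by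
  rw [maximalIdeal_eq_span_X]
  infer_instance

variable {A : Type*} [CommRing A] [IsDomain A] [IsDiscreteValuationRing A] {ϖ : A}

theorem C_dvd_of_map_residue_eq_zero (hϖ : Irreducible ϖ) {g : A⟦X⟧}
    (hg : g.map (residue A) = 0) : C ϖ ∣ g := by
  have hcoeff (n : ℕ) : ϖ ∣ coeff n g := by
    rw [← Ideal.mem_span_singleton, ← hϖ.maximalIdeal_eq, ← residue_eq_zero_iff, ← coeff_map, hg,
      map_zero]
  choose c hc using hcoeff
  exact ⟨mk c, ext fun n => by rw [coeff_C_mul, coeff_mk, hc]⟩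

theorem exists_eq_C_pow_mul_map_residue_ne_zero (hϖ : Irreducible ϖ) {g : A⟦X⟧} (hg : g ≠ 0) :
    ∃ (d : ℕ) (g' : A⟦X⟧), g = C ϖ ^ d * g' ∧ g'.map (residue A) ≠ 0 := by
  have hC : ¬IsUnit (C ϖ) := by
    rw [isUnit_iff_constantCoeff, constantCoeff_C]
    exact hϖ.not_isUnit
  obtain ⟨d, g', hndvd, rfl⟩ := WfDvdMonoid.max_power_factor' hg hC
  exact ⟨d, g', rfl, mt (C_dvd_of_map_residue_eq_zero hϖ) hndvd⟩

variable (S : Type*) [CommRing S] [Algebra A⟦X⟧ S] [IsLocalization.Away (C ϖ) S]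

theorem isUnit_algebraMap_C (hϖ : Irreducible ϖ) {a : A} (ha : a ≠ 0) :
    IsUnit (algebraMap A⟦X⟧ S (C a)) := by
  obtain ⟨n, u, rfl⟩ := IsDiscreteValuationRing.eq_unit_mul_pow_irreducible ha hϖ
  rw [map_mul, map_pow, map_mul, map_pow]
  exact ((u.isUnit.map C).map _).mul ((IsLocalization.Away.algebraMap_isUnit (C ϖ)).pow n)

noncomputable def fractionRingToAway (hϖ : Irreducible ϖ) : FractionRing A →+* S :=
  IsLocalization.lift (M := nonZeroDivisors A) (g := (algebraMap A⟦X⟧ S).comp C)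
    fun a => isUnit_algebraMap_C S hϖ (nonZeroDivisors.ne_zero a.2)

noncomputable def polynomialToAway (hϖ : Irreducible ϖ) : Polynomial (FractionRing A) →+* S :=
  Polynomial.eval₂RingHom (fractionRingToAway S hϖ) (algebraMap A⟦X⟧ S X)

theorem polynomialToAway_map (hϖ : Irreducible ϖ) (f : Polynomial A) :
    polynomialToAway S hϖ (f.map (algebraMap A (FractionRing A))) = algebraMap A⟦X⟧ S f := by
  rw [polynomialToAway, Polynomial.coe_eval₂RingHom, Polynomial.eval₂_map, fractionRingToAway,
    IsLocalization.lift_comp, ← Polynomial.hom_eval₂, Polynomial.eval₂_C_X_eq_coe]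

variable [IsAdicComplete (maximalIdeal A) A]

theorem exists_associated_algebraMap_coe (hϖ : Irreducible ϖ) (g : A⟦X⟧) :
    ∃ f : Polynomial A, Associated (algebraMap A⟦X⟧ S f) (algebraMap A⟦X⟧ S g) := by
  rcases eq_or_ne g 0 with rfl | hg
  · exact ⟨0, by rw [Polynomial.coe_zero]⟩
  obtain ⟨d, g', rfl, hg'⟩ := exists_eq_C_pow_mul_map_residue_ne_zero hϖ hg
  obtain ⟨f, h, hfh⟩ := exists_isWeierstrassFactorization hg'
  have hunit : IsUnit (algebraMap A⟦X⟧ S (C ϖ) ^ d * algebraMap A⟦X⟧ S h) :=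
    ((IsLocalization.Away.algebraMap_isUnit (C ϖ)).pow d).mul (hfh.isUnit.map _)
  refine ⟨f, ?_⟩
  rw [hfh.eq_mul, map_mul, map_pow, map_mul]
  convert associated_mul_unit_right _ _ hunit using 1
  ring

theorem exists_associated_polynomialToAway (hϖ : Irreducible ϖ) (x : S) :
    ∃ p : Polynomial (FractionRing A), Associated (polynomialToAway S hϖ p) x := by
  obtain ⟨⟨g, y⟩, hx⟩ := IsLocalization.surj (Submonoid.powers (C ϖ)) x
  obtain ⟨f, hf⟩ := exists_associated_algebraMap_coe S hϖ g
  refine ⟨f.map (algebraMap A (FractionRing A)), ?_⟩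
  rw [polynomialToAway_map]
  exact hf.trans (hx ▸ associated_mul_unit_right x _ (IsLocalization.map_units S y)).symm

theorem isPrincipalIdealRing_of_isLocalization_away_C (hϖ : Irreducible ϖ) :
    IsPrincipalIdealRing S :=
  .of_forall_associated_map (polynomialToAway S hϖ) (exists_associated_polynomialToAway S hϖ)

end PowerSeries

namespace MvPowerSeries

variable (R : Type*) [CommSemiring R]

/-- Variable `0` becomes the outer variable and variable `1` the variable of the coefficient
ring. -/
noncomputable def finTwoEquiv : MvPowerSeries (Fin 2) R ≃ₐ[R] PowerSeries (PowerSeries R) :=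
  (renameEquiv R <| (_root_.finSuccEquiv 1).trans <| .optionCongr <| .ofUnique (Fin 1) Unit).trans
    (optionEquivLeft Unit R)

theorem finTwoEquiv_X_one : finTwoEquiv R (X 1) = PowerSeries.C PowerSeries.X :=
  (congrArg (optionEquivLeft Unit R) (rename_X _ 1)).trans (optionEquivLeft_X_some ())

end MvPowerSeries

/-- Let `k` be a field.  The localization `k[[s,t]][t⁻¹]` of the formal power series ring
in two variables obtained by inverting `t` is a principal ideal domain. -/
theorem powerSeries_two_vars_invert_t_isPID
    (k : Type*) [Field k] :
    IsDomain (Localization.Away (MvPowerSeries.X 1 : MvPowerSeries (Fin 2) k)) ∧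
    IsPrincipalIdealRing
      (Localization.Away (MvPowerSeries.X 1 : MvPowerSeries (Fin 2) k)) := by
  let t : PowerSeries (PowerSeries k) := PowerSeries.C PowerSeries.X
  have hpowers : (Submonoid.powers (MvPowerSeries.X 1)).map
      (MvPowerSeries.finTwoEquiv k).toRingEquiv.toMonoidHom = Submonoid.powers t := by
    rw [Submonoid.map_powers]
    exact congrArg Submonoid.powers (MvPowerSeries.finTwoEquiv_X_one k)
  let E := IsLocalization.ringEquivOfRingEquiv
    (Localization.Away (MvPowerSeries.X 1 : MvPowerSeries (Fin 2) k))
    (Localization.Away t) _ hpowers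
  have ht : t ≠ 0 := (map_ne_zero_iff _ PowerSeries.C_injective).mpr PowerSeries.X_ne_zero
  have : IsDomain (Localization.Away t) :=
    IsLocalization.isDomain_localization (powers_le_nonZeroDivisors_of_noZeroDivisors ht)
  have : IsPrincipalIdealRing (Localization.Away t) :=
    PowerSeries.isPrincipalIdealRing_of_isLocalization_away_C _ (PowerSeries.X_irreducible (R := k))
  exact ⟨E.injective.isDomain E.toRingHom,
    IsPrincipalIdealRing.of_surjective E.symm.toRingHom E.symm.surjective⟩
end
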